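/- Let u₁, ū₂, ū₃ : ℝ² → ℝ be smooth functions satisfying the transformed characteristic system ∂x ū₃ = ū₃, ∂y ū₂ = 2ū₃ + ū₂, (∂x + ∂y)u₁ = ū₃ + 2ū₂ + u₁ on all of ℝ². Then there exist smooth functions F̄, G̃, H : ℝ → ℝ such that u₁(x,y) = 2e^y G̃(x) + e^x(3F̄(y) + F̄′(y)) + e^{(x+y)/2} H(x−y), ū₂(x,y) = e^y G̃′(x) + 2e^x F̄′(y), and ū₃(x,y) = e^x(F̄″(y) − F̄′(y)); i.e., the given formulas constitute the complete solution of the system. -/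

import Mathlib

/-- Partial derivative with respect to the first variable. -/
noncomputable def pdx (f : ℝ → ℝ → ℝ) : ℝ → ℝ → ℝ := fun x y => deriv (fun s => f s y) x

/-- Partial derivative with respect to the second variable. -/
noncomputable def pdy (f : ℝ → ℝ → ℝ) : ℝ → ℝ → ℝ := fun x y => deriv (fun t => f x t) y

/-- A function of two real variables is smooth. -/
def Smooth2 (f : ℝ → ℝ → ℝ) : Prop := ContDiff ℝ (⊤ : ℕ∞) (Function.uncurry f)

open Real Function

lemma aux_hasDerivAt_pdx {f : ℝ → ℝ → ℝ} (hf : Smooth2 f) (x y : ℝ) :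
    HasDerivAt (fun s => f s y) (fderiv ℝ (uncurry f) (x, y) (1, 0)) x := by
  have h1 : HasFDerivAt (uncurry f) (fderiv ℝ (uncurry f) (x, y)) (x, y) :=
    (hf.differentiable (by simp) (x, y)).hasFDerivAt
  have h2 : HasDerivAt (fun s : ℝ => (s, y)) ((1 : ℝ), (0 : ℝ)) x :=
    (hasDerivAt_id x).prodMk (hasDerivAt_const x y)
  exact h1.comp_hasDerivAt x h2

lemma aux_hasDerivAt_pdy {f : ℝ → ℝ → ℝ} (hf : Smooth2 f) (x y : ℝ) :
    HasDerivAt (fun t => f x t) (fderiv ℝ (uncurry f) (x, y) (0, 1)) y := by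
  have h1 : HasFDerivAt (uncurry f) (fderiv ℝ (uncurry f) (x, y)) (x, y) :=
    (hf.differentiable (by simp) (x, y)).hasFDerivAt
  have h2 : HasDerivAt (fun t : ℝ => (x, t)) ((0 : ℝ), (1 : ℝ)) y :=
    (hasDerivAt_const y x).prodMk (hasDerivAt_id y)
  exact h1.comp_hasDerivAt y h2

lemma pdx_eq_fderiv {f : ℝ → ℝ → ℝ} (hf : Smooth2 f) (x y : ℝ) :
    pdx f x y = fderiv ℝ (uncurry f) (x, y) (1, 0) := (aux_hasDerivAt_pdx hf x y).deriv

lemma pdy_eq_fderiv {f : ℝ → ℝ → ℝ} (hf : Smooth2 f) (x y : ℝ) :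
    pdy f x y = fderiv ℝ (uncurry f) (x, y) (0, 1) := (aux_hasDerivAt_pdy hf x y).deriv

lemma hasDerivAt_pdx' {f : ℝ → ℝ → ℝ} (hf : Smooth2 f) (x y : ℝ) :
    HasDerivAt (fun s => f s y) (pdx f x y) x := by
  rw [pdx_eq_fderiv hf]; exact aux_hasDerivAt_pdx hf x y

lemma hasDerivAt_pdy' {f : ℝ → ℝ → ℝ} (hf : Smooth2 f) (x y : ℝ) :
    HasDerivAt (fun t => f x t) (pdy f x y) y := by
  rw [pdy_eq_fderiv hf]; exact aux_hasDerivAt_pdy hf x y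

/-- derivative along a line with direction (d,e) -/
lemma hasDerivAt_line {f : ℝ → ℝ → ℝ} (hf : Smooth2 f) (x y d e t : ℝ) :
    HasDerivAt (fun t => f (x + d*t) (y + e*t))
      (d * pdx f (x + d*t) (y + e*t) + e * pdy f (x + d*t) (y + e*t)) t := by
  have h1 : HasFDerivAt (uncurry f) (fderiv ℝ (uncurry f) (x + d*t, y + e*t)) (x + d*t, y + e*t) :=
    (hf.differentiable (by simp) _).hasFDerivAt
  have h2 : HasDerivAt (fun t : ℝ => ((x + d*t : ℝ), (y + e*t : ℝ))) ((d : ℝ), (e : ℝ)) t := by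
    have := (((hasDerivAt_id t).const_mul d).const_add x).prodMk
      (((hasDerivAt_id t).const_mul e).const_add y)
    simpa using this
  have h3 := h1.comp_hasDerivAt t h2
  have h4 : ((d : ℝ), (e : ℝ)) = d • ((1:ℝ), (0:ℝ)) + e • ((0:ℝ), (1:ℝ)) := by
    simp [Prod.ext_iff]
  rw [h4, map_add, map_smul, map_smul] at h3
  rw [pdx_eq_fderiv hf, pdy_eq_fderiv hf]
  simp only [smul_eq_mul] at h3
  exact h3

/-- exponential growth lemma -/
lemma eq_exp_of_hasDerivAt_self {f : ℝ → ℝ} (hf : ∀ x, HasDerivAt f (f x) x) (x : ℝ) :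
    f x = Real.exp x * f 0 := by
  have hg : ∀ x, HasDerivAt (fun x => Real.exp (-x) * f x) 0 x := by
    intro x
    have h1 : HasDerivAt (fun x : ℝ => Real.exp (-x)) (-Real.exp (-x)) x := by
      simpa using ((hasDerivAt_id x).neg.exp)
    have := h1.mul (hf x)
    refine this.congr_deriv ?_; ring
  have hc : ∀ a b : ℝ, Real.exp (-a) * f a = Real.exp (-b) * f b := by
    intro a b
    exact is_const_of_deriv_eq_zero (fun x => (hg x).differentiableAt)
      (fun x => (hg x).deriv) a b
  have := hc x 0
  simp at this
  have h2 : Real.exp x * (Real.exp (-x) * f x) = Real.exp x * f 0 := by rw [this]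
  rwa [← mul_assoc, ← Real.exp_add, add_neg_cancel, Real.exp_zero, one_mul] at h2

lemma const_of_hasDerivAt_zero {f : ℝ → ℝ} (hf : ∀ x, HasDerivAt f 0 x) (a b : ℝ) :
    f a = f b :=
  is_const_of_deriv_eq_zero (fun x => (hf x).differentiableAt) (fun x => (hf x).deriv) a b

/-- Every smooth solution of the transformed system ∂x ū₃ = ū₃, ∂y ū₂ = 2ū₃+ū₂,
    (∂x+∂y)u₁ = ū₃+2ū₂+u₁ is given by the explicit formulas with three arbitrary
    smooth functions F̄, G̃, H of one variable: the formulas are the complete solution. -/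
theorem complete_solution_of_transformed_system
    (u₁ v₂ v₃ : ℝ → ℝ → ℝ)
    (hu₁ : Smooth2 u₁) (hv₂ : Smooth2 v₂) (hv₃ : Smooth2 v₃)
    (e₁ : ∀ x y : ℝ, pdx v₃ x y = v₃ x y)
    (e₂ : ∀ x y : ℝ, pdy v₂ x y = 2 * v₃ x y + v₂ x y)
    (e₃ : ∀ x y : ℝ, pdx u₁ x y + pdy u₁ x y = v₃ x y + 2 * v₂ x y + u₁ x y) :
    ∃ F G H : ℝ → ℝ,
      ContDiff ℝ (⊤ : ℕ∞) F ∧ ContDiff ℝ (⊤ : ℕ∞) G ∧ ContDiff ℝ (⊤ : ℕ∞) H ∧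
      (∀ x y : ℝ,
        u₁ x y = 2 * Real.exp y * G x + Real.exp x * (3 * F y + deriv F y)
          + Real.exp ((x + y) / 2) * H (x - y)) ∧
      (∀ x y : ℝ, v₂ x y = Real.exp y * deriv G x + 2 * Real.exp x * deriv F y) ∧
      (∀ x y : ℝ, v₃ x y = Real.exp x * (deriv (deriv F) y - deriv F y)) := by
  -- the three basic one-variable functions extracted from the data
  set a : ℝ → ℝ := fun y => v₃ 0 y with ha_def
  set c : ℝ → ℝ := fun x => v₂ x 0 with hc_def
  set p : ℝ → ℝ := fun y => (v₂ 0 y - Real.exp y * v₂ 0 0) / 2 with hp_def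
  have hp0 : p 0 = 0 := by simp [hp_def]
  -- p' = p + a
  have hp' : ∀ y, HasDerivAt p (p y + a y) y := by
    intro y
    have h1 : HasDerivAt (fun y => v₂ 0 y) (pdy v₂ 0 y) y := hasDerivAt_pdy' hv₂ 0 y
    have h2 : HasDerivAt (fun y => Real.exp y * v₂ 0 0) (Real.exp y * v₂ 0 0) y :=
      (Real.hasDerivAt_exp y).mul_const _
    have h3 := (h1.sub h2).div_const 2
    refine h3.congr_deriv ?_
    rw [e₂]
    simp only [ha_def, hp_def]
    ring
  -- step 1: v₃ x y = exp x * a y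
  have hv3eq : ∀ x y, v₃ x y = Real.exp x * a y := by
    intro x y
    have := eq_exp_of_hasDerivAt_self (f := fun x => v₃ x y)
      (fun x => by
        have h := hasDerivAt_pdx' hv₃ x y
        rw [e₁] at h
        simpa using h) x
    simpa [ha_def] using this
  -- step 2: v₂ x y = exp y * c x + 2 exp x * p y
  have hv2eq : ∀ x y, v₂ x y = Real.exp y * c x + 2 * Real.exp x * p y := by
    intro x y
    have key := eq_exp_of_hasDerivAt_self (f := fun y => v₂ x y - 2 * Real.exp x * p y)
      (fun y => by
        have h1 : HasDerivAt (fun y => v₂ x y) (pdy v₂ x y) y := hasDerivAt_pdy' hv₂ x y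
        have h2 : HasDerivAt (fun y => 2 * Real.exp x * p y) (2 * Real.exp x * (p y + a y)) y :=
          (hp' y).const_mul _
        have h3 := h1.sub h2
        refine h3.congr_deriv ?_
        rw [e₂, hv3eq]
        ring) y
    have : v₂ x y - 2 * Real.exp x * p y = Real.exp y * (v₂ x 0 - 2 * Real.exp x * p 0) := key
    rw [hp0] at this
    simp only [hc_def]
    linarith [this]
  -- derivatives of a and c
  set a' : ℝ → ℝ := fun y => pdy v₃ 0 y with ha'_def
  set c' : ℝ → ℝ := fun x => pdx v₂ x 0 with hc'_def
  have ha' : ∀ y, HasDerivAt a (a' y) y := fun y => hasDerivAt_pdy' hv₃ 0 y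
  have hc' : ∀ x, HasDerivAt c (c' x) x := fun x => hasDerivAt_pdx' hv₂ x 0
  -- pdx v₂ and pdy v₃ in closed form
  have hpdxv2 : ∀ x y, pdx v₂ x y = Real.exp y * c' x + 2 * Real.exp x * p y := by
    intro x y
    have hfun : (fun s => v₂ s y) = fun s => Real.exp y * c s + 2 * Real.exp s * p y :=
      funext (fun s => hv2eq s y)
    have hR : HasDerivAt (fun s => Real.exp y * c s + 2 * Real.exp s * p y)
        (Real.exp y * c' x + 2 * Real.exp x * p y) x := by
      have h1 := (hc' x).const_mul (Real.exp y)
      have h2 := ((Real.hasDerivAt_exp x).mul_const (p y)).const_mul (2:ℝ)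
      have h2' : HasDerivAt (fun s => 2 * Real.exp s * p y) (2 * Real.exp x * p y) x := by
        simpa [mul_assoc] using h2
      exact h1.add h2'
    show deriv (fun s => v₂ s y) x = _
    rw [hfun]
    exact hR.deriv
  have hpdyv3 : ∀ x y, pdy v₃ x y = Real.exp x * a' y := by
    intro x y
    have hfun : (fun t => v₃ x t) = fun t => Real.exp x * a t := funext (fun t => hv3eq x t)
    show deriv (fun t => v₃ x t) y = _
    rw [hfun]
    exact ((ha' y).const_mul (Real.exp x)).deriv
  -- Clairaut on the diagonal: derivative of s ↦ (pdx u₁ - pdy u₁)(s,s)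
  have hk : ∀ s : ℝ, HasDerivAt (fun s => pdx u₁ s s - pdy u₁ s s)
      (Real.exp s * (-3 * a s - a' s + 2 * c' s - 2 * c s) + (pdx u₁ s s - pdy u₁ s s)) s := by
    intro s
    set U := Function.uncurry u₁ with hU_def
    set L := fderiv ℝ U with hL_def
    have hUd : Differentiable ℝ U := hu₁.differentiable (by simp)
    have hLc : ContDiff ℝ (⊤ : ℕ∞) L := hu₁.fderiv_right (by simp)
    have hLd : Differentiable ℝ L := hLc.differentiable (by simp)
    set B := fderiv ℝ L (s, s) with hB_def
    have hB : HasFDerivAt L B (s, s) := (hLd _).hasFDerivAt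
    have hsymm : ∀ v w : ℝ × ℝ, B v w = B w v :=
      second_derivative_symmetric (fun z => (hUd z).hasFDerivAt) hB
    set App : ((ℝ × ℝ) →L[ℝ] ℝ) →L[ℝ] ℝ :=
      ContinuousLinearMap.apply ℝ ℝ (((1:ℝ), (-1:ℝ)) : ℝ × ℝ) with hApp_def
    set App' : ((ℝ × ℝ) →L[ℝ] ℝ) →L[ℝ] ℝ :=
      ContinuousLinearMap.apply ℝ ℝ (((1:ℝ), (1:ℝ)) : ℝ × ℝ) with hApp'_def
    -- the target function in fderiv form
    have hfun1 : (fun s' => pdx u₁ s' s' - pdy u₁ s' s')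
        = fun s' => L (s', s') ((1:ℝ), (-1:ℝ)) := by
      funext s'
      rw [pdx_eq_fderiv hu₁, pdy_eq_fderiv hu₁,
        show (((1:ℝ), (-1:ℝ)) : ℝ × ℝ) = ((1:ℝ), (0:ℝ)) - ((0:ℝ), (1:ℝ)) by
          simp [Prod.ext_iff],
        map_sub]
    -- derivative of the diagonal of L · (1,-1)
    have hMf : HasFDerivAt (fun z => L z ((1:ℝ), (-1:ℝ))) (App.comp B) (s, s) := by
      have := App.hasFDerivAt.comp (s, s) hB
      exact this
    have hcurve : HasDerivAt (fun s' : ℝ => ((s' : ℝ), (s' : ℝ))) (((1:ℝ), (1:ℝ))) s :=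
      (hasDerivAt_id s).prodMk (hasDerivAt_id s)
    have hdiagM : HasDerivAt (fun s' => L (s', s') ((1:ℝ), (-1:ℝ)))
        ((App.comp B) ((1:ℝ), (1:ℝ))) s := by
      have := hMf.comp_hasDerivAt_of_eq s hcurve rfl
      exact this
    -- the identity for L · (1,1)
    have hfun2 : (fun z : ℝ × ℝ => L z ((1:ℝ), (1:ℝ)))
        = fun z => v₃ z.1 z.2 + 2 * v₂ z.1 z.2 + u₁ z.1 z.2 := by
      funext z
      have h := e₃ z.1 z.2
      rw [pdx_eq_fderiv hu₁, pdy_eq_fderiv hu₁] at h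
      rw [show (((1:ℝ), (1:ℝ)) : ℝ × ℝ) = ((1:ℝ), (0:ℝ)) + ((0:ℝ), (1:ℝ)) by
          simp [Prod.ext_iff],
        map_add]
      simpa using h
    -- derivative of both sides of hfun2 along the antidiagonal curve at 0
    have hcurve2 : HasDerivAt (fun t : ℝ => ((s + 1*t : ℝ), (s + (-1)*t : ℝ)))
        (((1:ℝ), (-1:ℝ))) 0 := by
      have := (((hasDerivAt_id (0:ℝ)).const_mul (1:ℝ)).const_add s).prodMk
        (((hasDerivAt_id (0:ℝ)).const_mul (-1:ℝ)).const_add s)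
      simpa using this
    have he0 : ((s + 1*(0:ℝ) : ℝ), (s + (-1)*(0:ℝ) : ℝ)) = ((s : ℝ), (s : ℝ)) := by norm_num
    have hB' : HasFDerivAt L B ((s + 1*(0:ℝ) : ℝ), (s + (-1)*(0:ℝ) : ℝ)) := by rw [he0]; exact hB
    have hNl : HasDerivAt (fun t => L (s + 1*t, s + (-1)*t) ((1:ℝ), (1:ℝ)))
        ((App'.comp B) ((1:ℝ), (-1:ℝ))) 0 := by
      have h1 : HasFDerivAt (fun z => L z ((1:ℝ), (1:ℝ))) (App'.comp B)
          ((s + 1*(0:ℝ) : ℝ), (s + (-1)*(0:ℝ) : ℝ)) := by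
        rw [he0]
        exact App'.hasFDerivAt.comp (s, s) hB
      have := h1.comp_hasDerivAt_of_eq 0 hcurve2 rfl
      exact this
    have hNr : HasDerivAt (fun t => v₃ (s + 1*t) (s + (-1)*t) + 2 * v₂ (s + 1*t) (s + (-1)*t)
          + u₁ (s + 1*t) (s + (-1)*t))
        ((1 * pdx v₃ (s + 1*0) (s + (-1)*0) + (-1) * pdy v₃ (s + 1*0) (s + (-1)*0))
          + 2 * (1 * pdx v₂ (s + 1*0) (s + (-1)*0) + (-1) * pdy v₂ (s + 1*0) (s + (-1)*0))
          + (1 * pdx u₁ (s + 1*0) (s + (-1)*0) + (-1) * pdy u₁ (s + 1*0) (s + (-1)*0))) 0 := by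
      exact ((hasDerivAt_line hv₃ s s 1 (-1) 0).add
        ((hasDerivAt_line hv₂ s s 1 (-1) 0).const_mul 2)).add (hasDerivAt_line hu₁ s s 1 (-1) 0)
    have hfun2t : (fun t => L (s + 1*t, s + (-1)*t) ((1:ℝ), (1:ℝ)))
        = fun t => v₃ (s + 1*t) (s + (-1)*t) + 2 * v₂ (s + 1*t) (s + (-1)*t)
          + u₁ (s + 1*t) (s + (-1)*t) := by
      funext t
      exact congrFun hfun2 (s + 1*t, s + (-1)*t)
    rw [hfun2t] at hNl
    have hEq := hNl.unique hNr
    -- now put everything together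
    rw [hfun1]
    convert hdiagM using 1
    have h1 : (App.comp B) ((1:ℝ), (1:ℝ)) = B ((1:ℝ), (1:ℝ)) ((1:ℝ), (-1:ℝ)) := rfl
    have h2 : (App'.comp B) ((1:ℝ), (-1:ℝ)) = B ((1:ℝ), (-1:ℝ)) ((1:ℝ), (1:ℝ)) := rfl
    rw [h1, ← hsymm, ← h2, hEq]
    simp only [one_mul, mul_zero, add_zero, neg_mul, neg_zero]
    rw [hpdyv3, hpdxv2, e₂ s s, e₁ s s, hv3eq s s, hv2eq s s]
    ring
  -- diagonal derivative of u₁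
  have hdiagu : ∀ s : ℝ, HasDerivAt (fun s => u₁ s s) (pdx u₁ s s + pdy u₁ s s) s := by
    intro s
    have := hasDerivAt_line hu₁ 0 0 1 1 s
    simpa using this
  set D₁ : ℝ → ℝ := fun s => Real.exp (-s) * u₁ s s - p s with hD1_def
  set D₂ : ℝ → ℝ := fun s => Real.exp (-s) * (pdx u₁ s s - pdy u₁ s s) - 2 * c s + 3 * p s + a s
    with hD2_def
  set F : ℝ → ℝ := fun s => (D₁ s + D₂ s) / 6 with hF_def
  set G : ℝ → ℝ := fun s => (D₁ s - D₂ s) / 4 with hG_def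
  have hexpneg : ∀ s : ℝ, HasDerivAt (fun s : ℝ => Real.exp (-s)) (-Real.exp (-s)) s := by
    intro s
    simpa using (hasDerivAt_id s).neg.exp
  have hD1' : ∀ s, HasDerivAt D₁ (2 * c s + 3 * p s) s := by
    intro s
    have h2 := ((hexpneg s).mul (hdiagu s)).sub (hp' s)
    refine h2.congr_deriv ?_
    rw [e₃ s s, hv3eq s s, hv2eq s s, Real.exp_neg]
    field_simp
    ring
  have hD2' : ∀ s, HasDerivAt D₂ (3 * p s - 2 * c s) s := by
    intro s
    have h2 := ((((hexpneg s).mul (hk s)).sub ((hc' s).const_mul 2)).add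
      ((hp' s).const_mul 3)).add (ha' s)
    refine h2.congr_deriv ?_
    rw [Real.exp_neg]
    field_simp
    ring
  have hF' : ∀ s, HasDerivAt F (p s) s := by
    intro s
    have := ((hD1' s).add (hD2' s)).div_const 6
    refine this.congr_deriv ?_
    ring
  have hG' : ∀ s, HasDerivAt G (c s) s := by
    intro s
    have := ((hD1' s).sub (hD2' s)).div_const 4
    refine this.congr_deriv ?_
    ring
  have hderivF : deriv F = p := funext fun s => (hF' s).deriv
  have hderivG : deriv G = c := funext fun s => (hG' s).deriv
  have hderivp : deriv p = fun y => p y + a y := funext fun y => (hp' y).deriv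
  set H : ℝ → ℝ := fun s => Real.exp (-s/2) * (u₁ s 0 - 2 * G s - Real.exp s * (3 * F 0 + p 0))
    with hH_def
  -- the representation of u₁
  have hrep : ∀ x y : ℝ, u₁ x y = 2 * Real.exp y * G x + Real.exp x * (3 * F y + p y)
      + Real.exp ((x + y) / 2) * H (x - y) := by
    intro x y
    -- the function along the characteristic line
    set ψ : ℝ → ℝ := fun t => u₁ (x - y + t) t - 2 * Real.exp t * G (x - y + t)
      - Real.exp (x - y + t) * (3 * F t + p t) with hψ_def
    have hψ' : ∀ t, HasDerivAt ψ (ψ t) t := by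
      intro t
      have hshift : HasDerivAt (fun t : ℝ => x - y + t) 1 t := (hasDerivAt_id t).const_add (x - y)
      have hu : HasDerivAt (fun t => u₁ (x - y + t) t)
          (pdx u₁ (x - y + t) t + pdy u₁ (x - y + t) t) t := by
        simpa using hasDerivAt_line hu₁ (x - y) 0 1 1 t
      have hGc : HasDerivAt (fun t => G (x - y + t)) (c (x - y + t)) t := by
        exact ((hG' (x - y + t)).comp t hshift).congr_deriv (mul_one _)
      have hterm2 : HasDerivAt (fun t => 2 * Real.exp t * G (x - y + t))
          (2 * (Real.exp t * c (x - y + t) + Real.exp t * G (x - y + t))) t := by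
        have := ((Real.hasDerivAt_exp t).mul hGc).const_mul (2:ℝ)
        simpa [mul_assoc, mul_comm, mul_left_comm, add_comm] using this
      have hexpshift : HasDerivAt (fun t => Real.exp (x - y + t)) (Real.exp (x - y + t)) t := by
        exact ((Real.hasDerivAt_exp (x - y + t)).comp t hshift).congr_deriv (mul_one _)
      have hterm3 : HasDerivAt (fun t => Real.exp (x - y + t) * (3 * F t + p t))
          (Real.exp (x - y + t) * (3 * F t + p t)
            + Real.exp (x - y + t) * (3 * p t + (p t + a t))) t := by
        have h3 := ((hF' t).const_mul 3).add (hp' t)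
        exact hexpshift.mul h3
      have h4 := (hu.sub hterm2).sub hterm3
      refine h4.congr_deriv ?_
      rw [hψ_def]
      simp only
      rw [e₃, hv3eq, hv2eq]
      ring
    set φ : ℝ → ℝ := fun t => Real.exp (-(x - y + 2*t)/2) * ψ t with hφ_def
    have hφ' : ∀ t, HasDerivAt φ 0 t := by
      intro t
      have hg : HasDerivAt (fun t : ℝ => -(x - y + 2*t)/2) (-(2*1)/2) t :=
        ((((hasDerivAt_id t).const_mul 2).const_add (x - y)).neg).div_const 2
      have hE := hg.exp
      have hφd := hE.mul (hψ' t)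
      refine hφd.congr_deriv ?_
      ring
    have hconst := const_of_hasDerivAt_zero hφ' y 0
    rw [hφ_def] at hconst
    simp only at hconst
    rw [hψ_def] at hconst
    simp only at hconst
    have hxy : x - y + y = x := by ring
    rw [hxy] at hconst
    -- hconst : exp(-(x-y+2y)/2) * (u₁ x y - ...) = exp(-(x-y+2·0)/2) * (u₁ (x-y+0) 0 - ...)
    have hright : Real.exp (-(x - y + 2*(0:ℝ))/2) * (u₁ (x - y + 0) 0
        - 2 * Real.exp 0 * G (x - y + 0) - Real.exp (x - y + 0) * (3 * F 0 + p 0))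
        = H (x - y) := by
      rw [hH_def]
      simp only [add_zero, mul_zero, Real.exp_zero]
      ring_nf
    rw [hright] at hconst
    have hmul := congrArg (fun z => Real.exp ((x + y)/2) * z) hconst
    rw [← mul_assoc, ← Real.exp_add] at hmul
    have hzero : (x + y)/2 + -(x - y + 2*y)/2 = 0 := by ring
    rw [hzero, Real.exp_zero, one_mul] at hmul
    linarith [hmul]
  -- analyticity of the building blocks
  have hca : ContDiff ℝ (⊤ : ℕ∞) a := hv₃.comp (contDiff_const.prodMk contDiff_id)
  have hcc : ContDiff ℝ (⊤ : ℕ∞) c := hv₂.comp (contDiff_id.prodMk contDiff_const)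
  have hcp : ContDiff ℝ (⊤ : ℕ∞) p := by
    have h1 : ContDiff ℝ (⊤ : ℕ∞) (fun y => v₂ 0 y) := hv₂.comp (contDiff_const.prodMk contDiff_id)
    exact (h1.sub (Real.contDiff_exp.mul contDiff_const)).div_const 2
  have hcdiagu : ContDiff ℝ (⊤ : ℕ∞) (fun s => u₁ s s) := hu₁.comp (contDiff_id.prodMk contDiff_id)
  have hck : ContDiff ℝ (⊤ : ℕ∞) (fun s => pdx u₁ s s - pdy u₁ s s) := by
    have hLc : ContDiff ℝ (⊤ : ℕ∞) (fderiv ℝ (Function.uncurry u₁)) := hu₁.fderiv_right (by simp)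
    have h1 : ContDiff ℝ (⊤ : ℕ∞) (fun z : ℝ × ℝ => fderiv ℝ (Function.uncurry u₁) z ((1:ℝ), (0:ℝ))) :=
      hLc.clm_apply contDiff_const
    have h2 : ContDiff ℝ (⊤ : ℕ∞) (fun z : ℝ × ℝ => fderiv ℝ (Function.uncurry u₁) z ((0:ℝ), (1:ℝ))) :=
      hLc.clm_apply contDiff_const
    have h3 := (h1.comp (contDiff_id.prodMk contDiff_id)).sub
      (h2.comp (contDiff_id.prodMk contDiff_id))
    have h4 : (fun s : ℝ => pdx u₁ s s - pdy u₁ s s)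
        = fun s : ℝ => fderiv ℝ (Function.uncurry u₁) (s, s) ((1:ℝ), (0:ℝ))
          - fderiv ℝ (Function.uncurry u₁) (s, s) ((0:ℝ), (1:ℝ)) := by
      funext s
      rw [pdx_eq_fderiv hu₁, pdy_eq_fderiv hu₁]
    rw [h4]
    exact h3
  have hcexpneg : ContDiff ℝ (⊤ : ℕ∞) (fun s : ℝ => Real.exp (-s)) :=
    Real.contDiff_exp.comp contDiff_neg
  have hcD1 : ContDiff ℝ (⊤ : ℕ∞) D₁ := (hcexpneg.mul hcdiagu).sub hcp
  have hcD2 : ContDiff ℝ (⊤ : ℕ∞) D₂ :=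
    (((hcexpneg.mul hck).sub (contDiff_const.mul hcc)).add (contDiff_const.mul hcp)).add hca
  have hcF : ContDiff ℝ (⊤ : ℕ∞) F := (hcD1.add hcD2).div_const 6
  have hcG : ContDiff ℝ (⊤ : ℕ∞) G := (hcD1.sub hcD2).div_const 4
  have hcH : ContDiff ℝ (⊤ : ℕ∞) H := by
    have h1 : ContDiff ℝ (⊤ : ℕ∞) (fun s => u₁ s 0) := hu₁.comp (contDiff_id.prodMk contDiff_const)
    have h2 : ContDiff ℝ (⊤ : ℕ∞) (fun s : ℝ => Real.exp (-s/2)) :=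
      Real.contDiff_exp.comp (contDiff_neg.div_const 2)
    exact h2.mul ((h1.sub (contDiff_const.mul hcG)).sub
      (Real.contDiff_exp.mul contDiff_const))
  refine ⟨F, G, H, hcF, hcG, hcH, ?_, ?_, ?_⟩
  · intro x y
    rw [hderivF]
    exact hrep x y
  · intro x y
    rw [hderivF, hderivG]
    exact hv2eq x y
  · intro x y
    rw [hderivF, hderivp, hv3eq x y]
    ring
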